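/- (Lemma 2.1, Poincaré inequality with Gaussian weight) Let t ≥ 0 and α ∈ [1/4, 1/2]. Let g : [0,∞) → ℝ be continuously differentiable with g(0) = 0 (alternatively, g'(0) = 0), with g(y) → 0 as y → ∞, and such that θ_α(t,·)g and θ_α(t,·)g' belong to L²(0,∞). Then (α/⟨t⟩) ∫₀^∞ θ_α(t,y)² g(y)² dy ≤ ∫₀^∞ θ_α(t,y)² g'(y)² dy. -/

import Mathlib

/-!
Write `θ_α(t,y) = exp (c y²)` with `c = α/(4⟨t⟩)` and `h = θ g`, so that `θ g' = h' - 2 c y h`.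
Then `(θ g')² = (h' + 2 c y h)² - 8 c y h h' ≥ 4 c h² - 4 c (y h²)'`, and integrating over
`[0, R]` gives `4 c ∫₀^R h² ≤ ∫₀^R (θ g')² + 4 c R h(R)²`. Since `h²` is integrable, `R h(R)²`
cannot stay bounded away from `0`, so along some sequence `R → ∞` the boundary term disappears.
-/

open MeasureTheory Real Set Filter Topology

/-- The Gaussian weight `θ_α(t,y) = exp(α z(t,y)²/4)` with `z(t,y) = y/√⟨t⟩`, `⟨t⟩ = 1+t`. -/
noncomputable def theta (α t y : ℝ) : ℝ :=
  Real.exp (α * (y / Real.sqrt (1 + t)) ^ 2 / 4)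

theorem MeasureTheory.IntegrableOn.frequently_mul_norm_lt {E : Type*} [NormedAddCommGroup E]
    {f : ℝ → E} {a : ℝ} (hf : IntegrableOn f (Ioi a)) {ε : ℝ} (hε : 0 < ε) :
    ∃ᶠ R in atTop, R * ‖f R‖ < ε := by
  intro hlarge
  simp only [not_lt] at hlarge
  obtain ⟨M, hM⟩ := hlarge.exists_forall_of_atTop
  set b := max (max M a) 1
  -- `‖f y‖ ≥ ε / y` on `(b, ∞)` would make `y⁻¹` integrable there
  refine not_integrableOn_Ioi_inv (a := b) <|
    ((hf.mono_set (Ioi_subset_Ioi (by simp [b]))).norm.const_mul ε⁻¹).mono'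
      measurable_inv.aestronglyMeasurable ?_
  filter_upwards [ae_restrict_mem measurableSet_Ioi] with y (hy : b < y)
  have hy0 : 0 < y := lt_of_lt_of_le one_pos ((by simp [b] : 1 ≤ b).trans hy.le)
  rw [norm_inv, Real.norm_of_nonneg hy0.le, inv_le_iff_one_le_mul₀ hy0, mul_assoc,
    mul_comm ‖f y‖]
  exact (one_le_inv_mul₀ hε).2 (hM y ((by simp [b] : M ≤ b).trans hy.le))

theorem MeasureTheory.IntegrableOn.exists_seq_mul_norm_tendsto_zero {E : Type*}
    [NormedAddCommGroup E] {f : ℝ → E} {a : ℝ} (hf : IntegrableOn f (Ioi a)) :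
    ∃ R : ℕ → ℝ, Tendsto R atTop atTop ∧ Tendsto (fun n => R n * ‖f (R n)‖) atTop (𝓝 0) := by
  have hR : ∀ n : ℕ, ∃ R : ℝ, n ≤ R ∧ R * ‖f R‖ < 1 / (n + 1) := fun n =>
    (hf.frequently_mul_norm_lt (by positivity)).forall_exists_of_atTop n
  choose R hRn hRf using hR
  refine ⟨R, tendsto_atTop_mono hRn tendsto_natCast_atTop_atTop, ?_⟩
  refine squeeze_zero (fun n => ?_) (fun n => (hRf n).le) tendsto_one_div_add_atTop_nhds_zero_nat
  exact mul_nonneg ((Nat.cast_nonneg n).trans (hRn n)) (norm_nonneg _)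

theorem gaussian_poincare_interval {g : ℝ → ℝ} (hg : ContDiff ℝ 1 g) (c : ℝ) {R : ℝ}
    (hR : 0 ≤ R) :
    4 * c * ∫ y in 0..R, (exp (c * y ^ 2) * g y) ^ 2 ≤
      (∫ y in 0..R, (exp (c * y ^ 2) * deriv g y) ^ 2) +
        4 * c * (R * (exp (c * R ^ 2) * g R) ^ 2) := by
  set h : ℝ → ℝ := fun y => exp (c * y ^ 2) * g y
  set v : ℝ → ℝ := fun y => exp (c * y ^ 2) * deriv g y
  have hh : Continuous h := by fun_prop
  have hv : Continuous v := by
    have := hg.continuous_deriv le_rfl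
    fun_prop
  have hint {F : ℝ → ℝ} (hF : Continuous F) : IntervalIntegrable F volume 0 R :=
    hF.intervalIntegrable _ _
  have hderiv : ∀ y, HasDerivAt h (2 * c * y * h y + v y) y := fun y =>
    ((((hasDerivAt_pow 2 y).const_mul c).exp).mul
      ((hg.differentiable one_ne_zero) y).hasDerivAt).congr_deriv (by simp only [h, v]; ring)
  have hFTC : ∫ y in 0..R, (h y ^ 2 + 2 * y * h y * (2 * c * y * h y + v y)) = R * h R ^ 2 := by
    have hprim : ∀ y ∈ uIcc 0 R, HasDerivAt (fun y => y * h y ^ 2)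
        (h y ^ 2 + 2 * y * h y * (2 * c * y * h y + v y)) y := fun y _ =>
      ((hasDerivAt_id y).mul ((hderiv y).pow 2)).congr_deriv
        (by simp only [id_eq, Pi.pow_apply]; ring)
    simpa using intervalIntegral.integral_eq_sub_of_hasDerivAt hprim (hint (by fun_prop))
  have hpoint : ∀ y, 4 * c * h y ^ 2 - 4 * c * (h y ^ 2 + 2 * y * h y * (2 * c * y * h y + v y))
      ≤ v y ^ 2 := fun y => by
    nlinarith [sq_nonneg (v y + 4 * c * y * h y)]
  calc 4 * c * ∫ y in 0..R, h y ^ 2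
      = (∫ y in 0..R,
          (4 * c * h y ^ 2 - 4 * c * (h y ^ 2 + 2 * y * h y * (2 * c * y * h y + v y))))
          + 4 * c * (R * h R ^ 2) := by
        rw [intervalIntegral.integral_sub (hint (by fun_prop)) (hint (by fun_prop)),
          intervalIntegral.integral_const_mul, intervalIntegral.integral_const_mul, hFTC]
        ring
    _ ≤ (∫ y in 0..R, v y ^ 2) + 4 * c * (R * h R ^ 2) := by
        gcongr
        exact intervalIntegral.integral_mono_on hR (hint (by fun_prop)) (hint (by fun_prop))
          fun y _ => hpoint y

theorem gaussian_poincare_Ici {g : ℝ → ℝ} (hg : ContDiff ℝ 1 g) (c : ℝ)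
    (hL2 : IntegrableOn (fun y => (exp (c * y ^ 2) * g y) ^ 2) (Ici 0))
    (hL2' : IntegrableOn (fun y => (exp (c * y ^ 2) * deriv g y) ^ 2) (Ici 0)) :
    4 * c * ∫ y in Ici 0, (exp (c * y ^ 2) * g y) ^ 2 ≤
      ∫ y in Ici 0, (exp (c * y ^ 2) * deriv g y) ^ 2 := by
  have hL2Ioi := hL2.mono_set Ioi_subset_Ici_self
  obtain ⟨R, hR, hboundary⟩ := hL2Ioi.exists_seq_mul_norm_tendsto_zero
  have hlhs : Tendsto (fun n => 4 * c * ∫ y in 0..R n, (exp (c * y ^ 2) * g y) ^ 2) atTop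
      (𝓝 (4 * c * ∫ y in Ici 0, (exp (c * y ^ 2) * g y) ^ 2)) := by
    rw [integral_Ici_eq_integral_Ioi]
    exact (intervalIntegral_tendsto_integral_Ioi 0 hL2Ioi hR).const_mul _
  have hrhs := (hboundary.const_mul (4 * c)).const_add
    (∫ y in Ici 0, (exp (c * y ^ 2) * deriv g y) ^ 2)
  rw [mul_zero, add_zero] at hrhs
  refine le_of_tendsto_of_tendsto hlhs hrhs ?_
  filter_upwards [hR.eventually_ge_atTop 0] with n hn
  rw [Real.norm_of_nonneg (sq_nonneg _)]
  refine (gaussian_poincare_interval hg c hn).trans (add_le_add_left ?_ _)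
  rw [intervalIntegral.integral_of_le hn]
  exact setIntegral_mono_set hL2' (.of_forall fun _ => sq_nonneg _)
    (Ioc_subset_Ioi_self.trans Ioi_subset_Ici_self).eventuallyLE

theorem theta_eq_exp {α t : ℝ} (ht : 0 ≤ 1 + t) (y : ℝ) :
    theta α t y = exp (α / (1 + t) / 4 * y ^ 2) := by
  rw [theta, div_pow, sq_sqrt ht]
  ring_nf

theorem gaussian_weighted_poincare_general
    (t α : ℝ) (ht : 0 ≤ t)
    (g : ℝ → ℝ) (hg : ContDiff ℝ 1 g)
    (hL2 : Integrable (fun y => (theta α t y * g y) ^ 2) (volume.restrict (Set.Ici 0)))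
    (hL2' : Integrable (fun y => (theta α t y * deriv g y) ^ 2) (volume.restrict (Set.Ici 0))) :
    (α / (1 + t)) * ∫ y in Set.Ici (0:ℝ), (theta α t y * g y) ^ 2 ≤
      ∫ y in Set.Ici (0:ℝ), (theta α t y * deriv g y) ^ 2 := by
  simp only [theta_eq_exp (by linarith : 0 ≤ 1 + t)] at hL2 hL2' ⊢
  convert gaussian_poincare_Ici hg (α / (1 + t) / 4) hL2 hL2' using 2
  ring

/-- **Lemma 2.1 (Poincaré inequality with Gaussian weight).**
Let `t ≥ 0` and `α ∈ [1/4, 1/2]`.  If `g` is continuously differentiable, vanishes at `0`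
(or its derivative vanishes at `0`), tends to `0` at infinity, and `θ_α g`, `θ_α g'` are
square integrable on `(0,∞)`, then
`(α/⟨t⟩) ∫₀^∞ θ_α² g² ≤ ∫₀^∞ θ_α² g'²`. -/
theorem gaussian_weighted_poincare
    (t α : ℝ) (ht : 0 ≤ t) (hα : α ∈ Set.Icc (1/4 : ℝ) (1/2))
    (g : ℝ → ℝ) (hg : ContDiff ℝ 1 g)
    (hbc : g 0 = 0 ∨ deriv g 0 = 0)
    (hlim : Filter.Tendsto g Filter.atTop (nhds 0))
    (hL2 : Integrable (fun y => (theta α t y * g y) ^ 2) (volume.restrict (Set.Ici 0)))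
    (hL2' : Integrable (fun y => (theta α t y * deriv g y) ^ 2) (volume.restrict (Set.Ici 0))) :
    (α / (1 + t)) * ∫ y in Set.Ici (0:ℝ), (theta α t y * g y) ^ 2 ≤
      ∫ y in Set.Ici (0:ℝ), (theta α t y * deriv g y) ^ 2 :=
  gaussian_weighted_poincare_general t α ht g hg hL2 hL2'
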